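/- arXiv:1410.7207 — 6 statements merged into one kernel-verified Lean document; each statement's English description precedes it below -/
import Mathlib

section
/- Assume q ≥ 3. Let C ⊆ F_q^n be a nonzero linear code of dimension t, and let 1 ≤ r ≤ t. Then the r-th generalized Hamming weight d_r(C) = min{|χ(D)| : D ⊆ C subspace with dim(D) = r} equals min{dim(A) : A an optimal linear anticode in F_q^n with dim(A ∩ C) ≥ r}, where χ(D) = {i : there exists d ∈ D with d_i ≠ 0} and an optimal linear anticode is a subspace A with dim(A) = maxwt(A). -/
/-!
A subspace `D ≤ C` of dimension `r` lies in the coordinate subspace on its support, an optimal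
anticode of dimension `|χ(D)|`; so the anticode minimum is at most `d_r(C)`. Conversely, when
`q ≥ 3` an optimal anticode `A` satisfies `|χ(A)| ≤ dim A` (it is the coordinate subspace on the
support of any of its maximal-weight vectors), so an `r`-dimensional subspace of `A ⊓ C` has
support of size at most `dim A`.
-/

/-- Hamming weight of a vector. -/
noncomputable def hwt {n : ℕ} {K : Type*} [Zero K] (v : Fin n → K) : ℕ := Set.ncard {i | v i ≠ 0}

/-- Maximum Hamming weight of a linear code. -/
noncomputable def maxwt {n : ℕ} {K : Type*} [Field K] (C : Submodule K (Fin n → K)) : ℕ :=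
  sSup {w | ∃ v ∈ C, hwt v = w}

/-- Support of a subspace D ⊆ F_q^n. -/
def codeSupp {n : ℕ} {K : Type*} [Field K] (D : Submodule K (Fin n → K)) : Set (Fin n) :=
  {i | ∃ d ∈ D, d i ≠ 0}

open Module Function

lemma exists_ne_and_ne_of_three_le_card {α : Type*} [Fintype α] (h : 3 ≤ Fintype.card α)
    (a b : α) : ∃ c, c ≠ a ∧ c ≠ b := by
  classical
  obtain ⟨c, hc, hcb⟩ := Finset.exists_mem_ne (s := Finset.univ.erase a)
    (by rw [Finset.card_erase_of_mem (Finset.mem_univ a), Finset.card_univ]; omega) b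
  exact ⟨c, Finset.ne_of_mem_erase hc, hcb⟩

/-- Over a field with an element `y ∉ {0, 1}`, the vectors with no zero entry span `K^ι`, since
`Pi.single m 1 = (y - 1)⁻¹ • (update 1 m y - 1)`; so they cannot all lie in a hyperplane. -/
lemma exists_forall_ne_zero_and_apply_ne_zero {K ι : Type*} [Field K] [Finite ι] {y : K}
    (hy0 : y ≠ 0) (hy1 : y ≠ 1) {f : (ι → K) →ₗ[K] K} (hf : f ≠ 0) :
    ∃ t : ι → K, (∀ j, t j ≠ 0) ∧ f t ≠ 0 := by
  classical
  by_contra! H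
  apply hf
  ext m
  have hsingle : Pi.single m (1 : K) = (y - 1)⁻¹ • (update (1 : ι → K) m y - 1) := by
    ext j
    rcases eq_or_ne j m with rfl | hj
    · simp [inv_mul_cancel₀ (sub_ne_zero.2 hy1)]
    · simp [hj]
  have h1 : f 1 = 0 := H 1 fun _ => one_ne_zero
  have hy : f (update 1 m y) = 0 := H _ fun j => by
    rcases eq_or_ne j m with rfl | hj
    · simpa using hy0
    · simp [update_of_ne hj]
  simp [hsingle, map_sub, h1, hy]

lemma Submodule.exists_le_finrank_eq {K V : Type*} [DivisionRing K] [AddCommGroup V]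
    [Module K V] (p : Submodule K V) {r : ℕ} (hr : r ≤ finrank K p) :
    ∃ D ≤ p, finrank K D = r := by
  obtain ⟨f, hf⟩ := exists_linearIndependent_of_le_finrank hr
  refine ⟨(Submodule.span K (Set.range f)).map p.subtype, Submodule.map_subtype_le _ _, ?_⟩
  rw [Submodule.finrank_map_subtype_eq, finrank_span_eq_card hf, Fintype.card_fin]

section HammingWeight

variable {K : Type*} [Field K] {n : ℕ}

lemma hwt_eq_ncard_support (v : Fin n → K) : hwt v = (support v).ncard := rfl

lemma hwt_le (v : Fin n → K) : hwt v ≤ n := by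
  simpa [hwt_eq_ncard_support] using Set.ncard_le_ncard (Set.subset_univ (support v))

lemma bddAbove_hwt (A : Submodule K (Fin n → K)) : BddAbove {w | ∃ v ∈ A, hwt v = w} :=
  ⟨n, by rintro _ ⟨v, -, rfl⟩; exact hwt_le v⟩

lemma hwt_le_maxwt {A : Submodule K (Fin n → K)} {v : Fin n → K} (hv : v ∈ A) :
    hwt v ≤ maxwt A :=
  le_csSup (bddAbove_hwt A) ⟨v, hv, rfl⟩

lemma exists_hwt_eq_maxwt (A : Submodule K (Fin n → K)) : ∃ v ∈ A, hwt v = maxwt A :=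
  Nat.sSup_mem (s := {w | ∃ v ∈ A, hwt v = w}) ⟨_, 0, A.zero_mem, rfl⟩ (bddAbove_hwt A)

lemma codeSupp_mono {D A : Submodule K (Fin n → K)} (h : D ≤ A) : codeSupp D ⊆ codeSupp A :=
  fun _ ⟨d, hd, hdi⟩ => ⟨d, h hd, hdi⟩

/-- Otherwise `v + a` would have larger weight than `v`. -/
lemma eq_zero_of_eqOn_support_of_hwt_eq_maxwt {A : Submodule K (Fin n → K)} {v a : Fin n → K}
    (hv : v ∈ A) (hmax : hwt v = maxwt A) (ha : a ∈ A) (h0 : Set.EqOn a 0 (support v)) : a = 0 := by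
  have hdisj : Disjoint (support v) (support a) := disjoint_support_iff.2 h0
  have hunion : support v ∪ support a ⊆ support (v + a) := by
    rintro j (hj | hj)
    · simpa [show a j = 0 from h0 hj] using hj
    · simpa [show v j = 0 by simpa using Set.disjoint_right.1 hdisj hj] using hj
  have hle : (support v).ncard + (support a).ncard ≤ maxwt A := by
    rw [← Set.ncard_union_eq hdisj]
    exact (Set.ncard_le_ncard hunion).trans (hwt_le_maxwt (A.add_mem hv ha))
  have hempty : support a = ∅ :=
    (Set.ncard_eq_zero (Set.toFinite _)).1 (by rw [← hmax, hwt_eq_ncard_support] at hle; omega)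
  exact support_eq_empty_iff.1 hempty

end HammingWeight

section OptimalAnticode

variable {K : Type*} [Field K] {n : ℕ} {A : Submodule K (Fin n → K)}

/-- Restriction to the support `S` of a maximal-weight vector is injective on `A`, hence an
isomorphism `A ≃ K^S` when `dim A = |S|`. A coordinate `i ∉ S` on which `A` is not zero is then a
nonzero functional on `K^S`, nonzero at some vector with no zero entry; its preimage in `A` has
weight `|S| + 1`. -/
lemma codeSupp_subset_support_of_finrank_eq_maxwt {y : K} (hy0 : y ≠ 0) (hy1 : y ≠ 1)
    (hA : finrank K A = maxwt A) {v : Fin n → K} (hv : v ∈ A) (hmax : hwt v = maxwt A) :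
    codeSupp A ⊆ support v := by
  classical
  rintro i ⟨u, huA, hui⟩
  by_contra hiS
  set S := support v
  let π : A →ₗ[K] (S → K) := (LinearMap.funLeft K K ((↑) : S → Fin n)).comp A.subtype
  have hinj : Injective π := by
    rw [← LinearMap.ker_eq_bot, Submodule.eq_bot_iff]
    intro a ha
    exact Subtype.ext <| eq_zero_of_eqOn_support_of_hwt_eq_maxwt hv hmax a.2
      fun j hj => congrFun ha ⟨j, hj⟩
  have hdim : finrank K A = finrank K (S → K) := by
    rw [finrank_pi, hA, ← hmax, hwt_eq_ncard_support, ← Nat.card_coe_set_eq,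
      Nat.card_eq_fintype_card]
  let e : A ≃ₗ[K] (S → K) := LinearEquiv.ofBijective π
    ⟨hinj, (LinearMap.injective_iff_surjective_of_finrank_eq_finrank hdim).1 hinj⟩
  let f : (S → K) →ₗ[K] K := (LinearMap.proj i).comp (A.subtype.comp e.symm.toLinearMap)
  have hf : f ≠ 0 := fun h => hui <| by
    simpa [f] using LinearMap.congr_fun h (e ⟨u, huA⟩)
  obtain ⟨t, ht, hft⟩ := exists_forall_ne_zero_and_apply_ne_zero hy0 hy1 hf
  have hsub : insert i S ⊆ support (e.symm t : Fin n → K) := by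
    rintro j (rfl | hj)
    · exact hft
    · have hrestrict : (e.symm t : Fin n → K) j = t ⟨j, hj⟩ :=
        congrFun (e.apply_symm_apply t) ⟨j, hj⟩
      rw [mem_support, hrestrict]
      exact ht _
  have hcard := Set.ncard_le_ncard hsub (Set.toFinite _)
  rw [Set.ncard_insert_of_notMem hiS (Set.toFinite _), ← hwt_eq_ncard_support,
    ← hwt_eq_ncard_support] at hcard
  have := hwt_le_maxwt (e.symm t).2
  omega

lemma ncard_codeSupp_le_finrank_of_finrank_eq_maxwt {y : K} (hy0 : y ≠ 0) (hy1 : y ≠ 1)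
    (hA : finrank K A = maxwt A) : (codeSupp A).ncard ≤ finrank K A := by
  obtain ⟨v, hv, hmax⟩ := exists_hwt_eq_maxwt A
  calc (codeSupp A).ncard
      ≤ (support v).ncard :=
        Set.ncard_le_ncard (codeSupp_subset_support_of_finrank_eq_maxwt hy0 hy1 hA hv hmax)
    _ = finrank K A := by rw [← hwt_eq_ncard_support, hmax, hA]

end OptimalAnticode

section CoordinateSubspace

variable (K : Type*) [Field K] {n : ℕ}

def coordSubspace (S : Set (Fin n)) : Submodule K (Fin n → K) :=
  LinearMap.ker (LinearMap.funLeft K K ((↑) : ↥Sᶜ → Fin n))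

variable {K}

lemma mem_coordSubspace {S : Set (Fin n)} {v : Fin n → K} :
    v ∈ coordSubspace K S ↔ support v ⊆ S := by
  simp only [coordSubspace, LinearMap.mem_ker, funext_iff, LinearMap.funLeft_apply,
    Pi.zero_apply, Subtype.forall, Set.mem_compl_iff]
  exact ⟨fun h i hi => by_contra fun hiS => hi (h i hiS), fun h i hiS => by_contra fun hi => hiS (h hi)⟩

lemma finrank_coordSubspace (S : Set (Fin n)) : finrank K (coordSubspace K S) = S.ncard := by
  classical
  have hsurj : Surjective (LinearMap.funLeft K K ((↑) : ↥Sᶜ → Fin n)) :=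
    LinearMap.funLeft_surjective_of_injective K K _ Subtype.val_injective
  have hrank := LinearMap.finrank_range_add_finrank_ker
    (LinearMap.funLeft K K ((↑) : ↥Sᶜ → Fin n))
  rw [LinearMap.range_eq_top.2 hsurj, finrank_top, finrank_pi, finrank_pi, Fintype.card_fin,
    ← Nat.card_eq_fintype_card, Nat.card_coe_set_eq] at hrank
  have hcompl := Set.ncard_add_ncard_compl S
  rw [Nat.card_eq_fintype_card, Fintype.card_fin] at hcompl
  rw [coordSubspace]
  omega

lemma maxwt_coordSubspace (S : Set (Fin n)) : maxwt (coordSubspace K S) = S.ncard := by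
  classical
  obtain ⟨v, hv, hmax⟩ := exists_hwt_eq_maxwt (coordSubspace K S)
  refine le_antisymm ?_ ?_
  · rw [← hmax, hwt_eq_ncard_support]
    exact Set.ncard_le_ncard (mem_coordSubspace.1 hv)
  · have hind : support (S.indicator (1 : Fin n → K)) = S := by simp
    have hmem := hwt_le_maxwt (mem_coordSubspace.2 hind.le)
    rwa [hwt_eq_ncard_support, hind] at hmem

lemma le_coordSubspace_codeSupp (D : Submodule K (Fin n → K)) :
    D ≤ coordSubspace K (codeSupp D) :=
  fun d hd => mem_coordSubspace.2 fun _ hi => ⟨d, hd, hi⟩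

end CoordinateSubspace

theorem stmt3_general {K : Type*} [Field K] [Fintype K] (hq : 3 ≤ Fintype.card K) {n : ℕ}
    (C : Submodule K (Fin n → K))
    (r : ℕ) (hr2 : r ≤ Module.finrank K C) :
    sInf {c : ℕ | ∃ D : Submodule K (Fin n → K),
        D ≤ C ∧ Module.finrank K D = r ∧ (codeSupp D).ncard = c} =
    sInf {d : ℕ | ∃ A : Submodule K (Fin n → K),
        Module.finrank K A = maxwt A ∧ r ≤ Module.finrank K ↥(A ⊓ C) ∧
        Module.finrank K A = d} := by
  obtain ⟨y, hy0, hy1⟩ := exists_ne_and_ne_of_three_le_card hq 0 1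
  set weights := {c : ℕ | ∃ D : Submodule K (Fin n → K),
      D ≤ C ∧ Module.finrank K D = r ∧ (codeSupp D).ncard = c}
  set anticodes := {d : ℕ | ∃ A : Submodule K (Fin n → K),
      Module.finrank K A = maxwt A ∧ r ≤ Module.finrank K ↥(A ⊓ C) ∧ Module.finrank K A = d}
  have hsub : weights ⊆ anticodes := by
    rintro _ ⟨D, hDC, rfl, rfl⟩
    refine ⟨coordSubspace K (codeSupp D), ?_, ?_, finrank_coordSubspace _⟩
    · rw [finrank_coordSubspace, maxwt_coordSubspace]
    · exact Submodule.finrank_mono (le_inf (le_coordSubspace_codeSupp D) hDC)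
  have hne : weights.Nonempty := by
    obtain ⟨D, hDC, hDr⟩ := C.exists_le_finrank_eq hr2
    exact ⟨_, D, hDC, hDr, rfl⟩
  refine le_antisymm (le_csInf (hne.mono hsub) ?_) (Nat.sInf_le (hsub (Nat.sInf_mem hne)))
  rintro _ ⟨A, hA, hAC, rfl⟩
  obtain ⟨D, hD, rfl⟩ := (A ⊓ C).exists_le_finrank_eq hAC
  calc sInf weights ≤ (codeSupp D).ncard := Nat.sInf_le ⟨D, hD.trans inf_le_right, rfl, rfl⟩
    _ ≤ (codeSupp A).ncard := Set.ncard_le_ncard (codeSupp_mono (hD.trans inf_le_left))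
    _ ≤ finrank K A := ncard_codeSupp_le_finrank_of_finrank_eq_maxwt hy0 hy1 hA

/-- for q ≥ 3 and a nonzero code C of dimension t, for 1 ≤ r ≤ t,
the r-th generalized Hamming weight equals the minimum dimension of an optimal
linear anticode A with dim(A ⊓ C) ≥ r. -/
theorem stmt3 {K : Type*} [Field K] [Fintype K] (hq : 3 ≤ Fintype.card K) {n : ℕ}
    (C : Submodule K (Fin n → K)) (hC : C ≠ ⊥)
    (r : ℕ) (hr1 : 1 ≤ r) (hr2 : r ≤ Module.finrank K C) :
    sInf {c : ℕ | ∃ D : Submodule K (Fin n → K),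
        D ≤ C ∧ Module.finrank K D = r ∧ (codeSupp D).ncard = c} =
    sInf {d : ℕ | ∃ A : Submodule K (Fin n → K),
        Module.finrank K A = maxwt A ∧ r ≤ Module.finrank K ↥(A ⊓ C) ∧
        Module.finrank K A = d} :=
  stmt3_general hq C r hr2
end

section
/- Let 1 ≤ k ≤ m be integers and let C ⊆ F_{q^m}^k be an F_{q^m}-subspace (a Gabidulin code). Then dim_{F_{q^m}}(C) ≤ maxrk(C), where the rank of a vector v ∈ F_{q^m}^k is the dimension over F_q of the F_q-span of its components v_1, ..., v_k, and maxrk(C) = max{rk(c) : c ∈ C}. -/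
/-- Rank of a vector v ∈ L^k over the base field K: the K-dimension of the
K-span of its components. -/
noncomputable def vrk (K : Type*) {L : Type*} [Field K] [Field L] [Algebra K L]
    {k : ℕ} (v : Fin k → L) : ℕ :=
  Module.finrank K (Submodule.span K (Set.range v))

/-- Maximum rank of a Gabidulin code. -/
noncomputable def maxrk (K : Type*) {L : Type*} [Field K] [Field L] [Algebra K L]
    {k : ℕ} (C : Submodule L (Fin k → L)) : ℕ :=
  sSup {r | ∃ v ∈ C, vrk K v = r}

/-!
A code `C ⊆ L^k` of dimension `d` has an information set: `d` coordinates on which the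
codewords of `C` take every value exactly once. Prescribing `K`-linearly independent values on
them, which is possible as `d ≤ k ≤ dim_K L`, gives a codeword of rank at least `d`.
-/

open Module

namespace Submodule

variable {F ι : Type*} [Field F]

def IsInformationSet (C : Submodule F (ι → F)) (s : Set ι) : Prop :=
  Function.Bijective (LinearMap.funLeft F F ((↑) : s → ι) ∘ₗ C.subtype)

theorem exists_isInformationSet [Finite ι] (C : Submodule F (ι → F)) :
    ∃ s, C.IsInformationSet s := by
  -- `s` indexes a basis of the span of the coordinate functionals `c ↦ c j` on `C`.
  let coord : ι → C → F := fun j c => (c : ι → F) j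
  obtain ⟨s, -, -, hspan, hli⟩ := exists_linearIndepOn_extension
    (linearIndepOn_empty F coord) (Set.empty_subset Set.univ)
  refine ⟨s, ?_, ?_⟩
  · rw [injective_iff_map_eq_zero]
    intro c hc
    have hker : span F (coord '' s) ≤ LinearMap.ker (LinearMap.proj c) := by
      rw [span_le]
      rintro _ ⟨i, hi, rfl⟩
      exact congrFun hc ⟨i, hi⟩
    ext j
    exact hker (hspan ⟨j, trivial, rfl⟩)
  · rw [← LinearMap.range_eq_top, ← span_flip_eq_top_iff_linearIndependent.mpr hli]
    exact (span_eq _).symm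

end Submodule

section RankMetric

variable {K L : Type*} [Field K] [Field L] [Algebra K L] {k : ℕ}

theorem vrk_le (v : Fin k → L) : vrk K v ≤ k := by
  simpa [vrk, Set.finrank] using finrank_range_le_card (R := K) v

theorem vrk_le_maxrk {C : Submodule L (Fin k → L)} {v : Fin k → L} (hv : v ∈ C) :
    vrk K v ≤ maxrk K C :=
  le_csSup ⟨k, by rintro _ ⟨w, -, rfl⟩; exact vrk_le w⟩ ⟨v, hv, rfl⟩

theorem card_le_vrk_of_linearIndepOn {v : Fin k → L} {s : Set (Fin k)} [Fintype s]
    (hv : LinearIndepOn K v s) : Fintype.card s ≤ vrk K v := by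
  have := FiniteDimensional.span_of_finite K (Set.finite_range v)
  rw [vrk, ← finrank_span_eq_card hv]
  exact Submodule.finrank_mono (Submodule.span_mono (Set.range_comp_subset_range _ _))

end RankMetric

theorem stmt5_general {K L : Type*} [Field K] [Field L] [Algebra K L] {k m : ℕ}
    (hkm : k ≤ m) (hm : Module.finrank K L = m)
    (C : Submodule L (Fin k → L)) :
    Module.finrank L C ≤ maxrk K C := by
  classical
  obtain ⟨s, hs⟩ := C.exists_isInformationSet
  have hdim : finrank L C = Fintype.card s := by
    rw [(LinearEquiv.ofBijective _ hs).finrank_eq, finrank_fintype_fun_eq_card]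
  have hcard : Fintype.card s ≤ finrank K L := by
    simpa [hm] using (set_fintype_card_le_univ s).trans (by simpa using hkm)
  obtain ⟨w, hw⟩ := exists_linearIndependent_of_le_finrank hcard
  obtain ⟨c, hc⟩ := hs.2 (w ∘ Fintype.equivFin s)
  have hcs : LinearIndepOn K (c : Fin k → L) s := by
    change LinearIndependent K ((LinearMap.funLeft L L ((↑) : s → Fin k) ∘ₗ C.subtype) c)
    rw [hc]
    exact hw.comp _ (Fintype.equivFin s).injective
  calc finrank L C = Fintype.card s := hdim
    _ ≤ vrk K (c : Fin k → L) := card_le_vrk_of_linearIndepOn hcs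
    _ ≤ maxrk K C := vrk_le_maxrk c.2

/-- for 1 ≤ k ≤ m and a Gabidulin code C ⊆ F_{q^m}^k,
dim_{F_{q^m}} C ≤ maxrk C. -/
theorem stmt5 {K L : Type*} [Field K] [Field L] [Algebra K L] [Fintype K] {k m : ℕ}
    (hk : 1 ≤ k) (hkm : k ≤ m) (hm : Module.finrank K L = m)
    (C : Submodule L (Fin k → L)) :
    Module.finrank L C ≤ maxrk K C :=
  stmt5_general hkm hm C
end

section
/- Let H ⊆ F_{q^m} be an F_q-subspace of dimension h over F_q with 1 ≤ h ≤ m − 2, let x ∈ F_{q^m} \ H, and let y ∈ F_{q^m}. Then there exists α ∈ F_{q^m} \ H such that x + αy ∉ H ⊕ ⟨α⟩, where ⟨α⟩ denotes the F_q-span of α. -/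
/-!
If `α ∉ H` fails the claim, then `x + α y = p + k α` with `p ∈ H`, `k ∈ K`, so
`x - p = α (k - y)`; as `x ∉ H` the factor `k - y` is nonzero and `α = (x - p) / (k - y)`.
Hence, were the claim false, every element of `L` would lie in `H` or be one of these
`q^h · q` quotients, giving `q^m ≤ q^h (1 + q) < q^(h+2)`, which contradicts `h + 2 ≤ m`.
-/

open Submodule

section

variable {K L : Type*} [Field K] [Field L] [Algebra K L]

lemma exists_eq_div_of_add_mul_mem_sup_span {H : Submodule K L} {x α : L} (hx : x ∉ H) (y : L)
    (hα : x + α * y ∈ H ⊔ span K {α}) :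
    ∃ p ∈ H, ∃ k : K, α = (x - p) / (algebraMap K L k - y) := by
  obtain ⟨p, hp, _, hc, hpc⟩ := mem_sup.mp hα
  obtain ⟨k, rfl⟩ := mem_span_singleton.mp hc
  have hxp : x - p = α * (algebraMap K L k - y) := by
    rw [Algebra.smul_def] at hpc
    linear_combination -hpc
  have hky : algebraMap K L k - y ≠ 0 := by
    rintro hky
    rw [hky, mul_zero, sub_eq_zero] at hxp
    exact hx (hxp ▸ hp)
  exact ⟨p, hp, k, by rw [hxp, mul_div_cancel_right₀ _ hky]⟩

lemma natCard_le_of_forall_add_mul_mem_sup_span [Finite L] (H : Submodule K L) {x : L}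
    (hx : x ∉ H) (y : L) (h : ∀ α ∉ H, x + α * y ∈ H ⊔ span K {α}) :
    Nat.card L ≤ Nat.card H * (1 + Nat.card K) := by
  have : Finite K := Finite.of_injective _ (algebraMap K L).injective
  let quot : H × K → L := fun p ↦ (x - p.1) / (algebraMap K L p.2 - y)
  have hcover : (Set.univ : Set L) ⊆ (H : Set L) ∪ Set.range quot := by
    intro α _
    by_cases hαH : α ∈ H
    · exact Or.inl hαH
    · obtain ⟨p, hp, k, hpk⟩ := exists_eq_div_of_add_mul_mem_sup_span hx y (h α hαH)
      exact Or.inr ⟨(⟨p, hp⟩, k), hpk.symm⟩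
  calc Nat.card L = (Set.univ : Set L).ncard := (Set.ncard_univ L).symm
    _ ≤ ((H : Set L) ∪ Set.range quot).ncard := Set.ncard_le_ncard hcover
    _ ≤ (H : Set L).ncard + (Set.range quot).ncard := Set.ncard_union_le _ _
    _ ≤ Nat.card H + Nat.card (H × K) := by
        gcongr
        · exact (Nat.card_coe_set_eq _).symm.le
        · rw [← Nat.card_coe_set_eq]
          exact Finite.card_range_le quot
    _ = Nat.card H * (1 + Nat.card K) := by rw [Nat.card_prod]; ring

end

lemma pow_mul_one_add_lt_pow_add_two {q : ℕ} (hq : 2 ≤ q) (h : ℕ) :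
    q ^ h * (1 + q) < q ^ (h + 2) := by
  rw [pow_add]
  exact Nat.mul_lt_mul_of_pos_left (by nlinarith) (Nat.pow_pos (by omega))

/-- if H ⊆ F_{q^m} is an F_q-subspace of dimension h with
1 ≤ h ≤ m − 2, x ∉ H and y ∈ F_{q^m}, then there is α ∉ H with
x + αy ∉ H + ⟨α⟩. -/
theorem stmt6 {K L : Type*} [Field K] [Field L] [Algebra K L] [Fintype K] {m h : ℕ}
    (hm : Module.finrank K L = m)
    (H : Submodule K L) (hH : Module.finrank K H = h) (h1 : 1 ≤ h) (h2 : h ≤ m - 2)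
    (x : L) (hx : x ∉ H) (y : L) :
    ∃ α : L, α ∉ H ∧ x + α * y ∉ H ⊔ Submodule.span K {α} := by
  by_contra! hcover
  have : FiniteDimensional K L := FiniteDimensional.of_finrank_pos (by omega)
  have : Finite L := Module.finite_of_finite K
  have hq : 2 ≤ Nat.card K := Finite.one_lt_card
  have hcard := natCard_le_of_forall_add_mul_mem_sup_span H hx y hcover
  rw [Module.natCard_eq_pow_finrank (K := K) (V := L),
    Module.natCard_eq_pow_finrank (K := K) (V := H), hm, hH] at hcard
  have hle : Nat.card K ^ (h + 2) ≤ Nat.card K ^ m := Nat.pow_le_pow_right (by omega) (by omega)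
  exact (hle.trans hcard).not_gt (pow_mul_one_add_lt_pow_add_two hq h)
end

section
/- Let 1 ≤ k ≤ m. An F_{q^m}-subspace V ⊆ F_{q^m}^k is Frobenius-closed (i.e., closed under the componentwise q-th power map) if and only if V is an optimal Gabidulin anticode, i.e., dim_{F_{q^m}}(V) = maxrk(V), where rk(v) = dim_{F_q} Span_{F_q}{v_1,...,v_k} and maxrk(V) = max{rk(v) : v ∈ V}. -/
/-- V is Frobenius-closed if stable under the componentwise q-power map. -/
def FrobClosed (K : Type*) {L : Type*} [Field K] [Fintype K] [Field L] [Algebra K L]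
    {k : ℕ} (V : Submodule L (Fin k → L)) : Prop :=
  ∀ v ∈ V, (fun i => v i ^ Fintype.card K) ∈ V

/-!
Let `N ⊆ K^k` be the `K`-linear relations `∑ xᵢ vᵢ = 0` satisfied by every `v ∈ V`, and let
`W ⊇ V` be their common zero set in `L^k`. Then `W` is Frobenius-closed and `dim W = k - dim N`.
Every `v ∈ V` has rank `k - dim {x | ∑ xᵢ vᵢ = 0} ≤ k - dim N`, and equality is attained: the
kernels of the fewer than `q^k ≤ q^m = |L|` nonzero functionals `v ↦ ∑ xᵢ vᵢ` (`x ∉ N`) cannot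
cover `V`.
Hence `maxrk V = dim W ≥ dim V`, and `dim V = maxrk V` forces `V = W`.

Conversely, if `V` is Frobenius-closed and `rk v = r`, then `v, v^q, …, v^(q^(r-1)) ∈ V` are
linearly independent (`q = |K|`): a relation `∑ cₛ v^(q^s) = 0` gives a `q`-polynomial of degree
at most `q^(r-1)` vanishing on the `q^r` elements of the `K`-span of the entries of `v`, so all
`cₛ = 0`.
-/

open Module Polynomial

theorem Module.Dual.exists_forall_apply_ne_zero_of_card_lt {L E ι : Type*} [Field L] [Finite L]
    [AddCommGroup E] [Module L E] [FiniteDimensional L E] [Fintype ι]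
    (f : ι → Module.Dual L E) (hf : ∀ i, f i ≠ 0) (hcard : Fintype.card ι < Nat.card L) :
    ∃ x, ∀ i, f i x ≠ 0 := by
  classical
  have : Finite E := Module.finite_of_finite L
  have : Fintype E := Fintype.ofFinite E
  by_contra! hcover
  have hker (i : ι) : Nat.card (LinearMap.ker (f i)) * Nat.card L = Nat.card E := by
    rw [natCard_eq_pow_finrank (K := L), natCard_eq_pow_finrank (K := L) (V := E), ← pow_succ,
      Module.Dual.finrank_ker_add_one_of_ne_zero (hf i)]
  have hunion : Nat.card E ≤ ∑ i, Nat.card (LinearMap.ker (f i)) := by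
    calc Nat.card E = (Finset.univ : Finset E).card := by simp
      _ ≤ (Finset.univ.biUnion fun i => Finset.univ.filter fun x => f i x = 0).card := by
        refine Finset.card_le_card fun x _ => ?_
        obtain ⟨i, hi⟩ := hcover x
        exact Finset.mem_biUnion.2 ⟨i, Finset.mem_univ _, by simpa using hi⟩
      _ ≤ ∑ i, (Finset.univ.filter fun x => f i x = 0).card := Finset.card_biUnion_le
      _ = ∑ i, Nat.card (LinearMap.ker (f i)) := by
        simp [Nat.card_eq_fintype_card, Fintype.card_subtype]
  have hE : 0 < Nat.card E := Nat.card_pos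
  have : Nat.card E * Nat.card L ≤ Fintype.card ι * Nat.card E := by
    calc Nat.card E * Nat.card L ≤ (∑ i, Nat.card (LinearMap.ker (f i))) * Nat.card L :=
          Nat.mul_le_mul_right _ hunion
      _ = Fintype.card ι * Nat.card E := by
        rw [Finset.sum_mul, Finset.sum_congr rfl fun i _ => hker i, Finset.sum_const,
          Finset.card_univ, smul_eq_mul]
  linarith [Nat.mul_lt_mul_of_pos_right hcard hE]

section Relations

variable {K L : Type*} [Field K] [Field L] [Algebra K L] {k : ℕ}

variable (K) in
noncomputable def rationalRelations (V : Submodule L (Fin k → L)) : Submodule K (Fin k → K) :=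
  ⨅ v ∈ V, LinearMap.ker (Fintype.linearCombination K v)

theorem mem_rationalRelations {V : Submodule L (Fin k → L)} {x : Fin k → K} :
    x ∈ rationalRelations K V ↔ ∀ v ∈ V, ∑ i, x i • v i = 0 := by
  simp [rationalRelations, Fintype.linearCombination_apply]

variable (L) in
/-- `(piRing K L (Fin k) L).symm w` is the form `x ↦ ∑ i, x i • w i` on `K^k`. -/
noncomputable def zeroLocusMap (N : Submodule K (Fin k → K)) :
    (Fin k → L) →ₗ[L] N →ₗ[K] L :=
  LinearMap.lcomp L L N.subtype ∘ₗ (LinearEquiv.piRing K L (Fin k) L).symm.toLinearMap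

variable (L) in
noncomputable def zeroLocus (N : Submodule K (Fin k → K)) :
    Submodule L (Fin k → L) :=
  LinearMap.ker (zeroLocusMap L N)

theorem mem_zeroLocus {N : Submodule K (Fin k → K)} {w : Fin k → L} :
    w ∈ zeroLocus L N ↔ ∀ x ∈ N, ∑ i, x i • w i = 0 := by
  simp [zeroLocus, zeroLocusMap, LinearMap.ext_iff]

theorem le_zeroLocus_rationalRelations (V : Submodule L (Fin k → L)) :
    V ≤ zeroLocus L (rationalRelations K V) :=
  fun v hv => mem_zeroLocus.2 fun _ hx => mem_rationalRelations.1 hx v hv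

theorem finrank_zeroLocus_add_finrank (N : Submodule K (Fin k → K)) :
    finrank L (zeroLocus L N) + finrank K N = k := by
  have hsurj : Function.Surjective (zeroLocusMap L N) := by
    intro f
    obtain ⟨g, rfl⟩ := LinearMap.exists_extend f
    exact ⟨LinearEquiv.piRing K L (Fin k) L g, by simp [zeroLocusMap, LinearMap.lcomp_apply']⟩
  have := LinearMap.finrank_range_add_finrank_ker (zeroLocusMap L N)
  rw [LinearMap.range_eq_top.2 hsurj, finrank_top, finrank_linearMap_self,
    finrank_fin_fun] at this
  rw [zeroLocus]
  omega

theorem frobClosed_zeroLocus [Fintype K] (N : Submodule K (Fin k → K)) :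
    FrobClosed K (zeroLocus L N) := by
  intro w hw
  refine mem_zeroLocus.2 fun x hx => ?_
  have := congrArg (FiniteField.frobeniusAlgHom K L) (mem_zeroLocus.1 hw x hx)
  simpa [map_sum, map_smul] using this

theorem vrk_add_finrank_ker (v : Fin k → L) :
    vrk K v + finrank K (LinearMap.ker (Fintype.linearCombination K v)) = k := by
  rw [vrk, ← Fintype.range_linearCombination, LinearMap.finrank_range_add_finrank_ker,
    finrank_fin_fun]


theorem rationalRelations_le_ker {V : Submodule L (Fin k → L)} {v : Fin k → L} (hv : v ∈ V) :
    rationalRelations K V ≤ LinearMap.ker (Fintype.linearCombination K v) :=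
  fun _ hx => by
    simpa [Fintype.linearCombination_apply] using mem_rationalRelations.1 hx v hv

theorem exists_ker_linearCombination_eq_rationalRelations [Fintype K] [FiniteDimensional K L]
    (hk : k ≤ finrank K L) (V : Submodule L (Fin k → L)) :
    ∃ v ∈ V, LinearMap.ker (Fintype.linearCombination K v) = rationalRelations K V := by
  classical
  let N := rationalRelations K V
  let f (x : {x // x ∉ N}) : Module.Dual L V :=
    ((Fintype.bilinearCombination K L).flip x.1) ∘ₗ V.subtype
  have hf (x : {x // x ∉ N}) : f x ≠ 0 := by
    intro h
    refine x.2 (mem_rationalRelations.2 fun v hv => ?_)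
    simpa [f, Fintype.linearCombination_apply] using LinearMap.congr_fun h ⟨v, hv⟩
  have hcard : Fintype.card {x // x ∉ N} < Nat.card L := by
    calc Fintype.card {x // x ∉ N} < Fintype.card (Fin k → K) :=
          Fintype.card_subtype_lt (not_not.2 N.zero_mem)
      _ = Fintype.card K ^ k := by simp
      _ ≤ Fintype.card K ^ finrank K L := Nat.pow_le_pow_right Fintype.card_pos hk
      _ = Nat.card L := by rw [natCard_eq_pow_finrank (K := K), Nat.card_eq_fintype_card]
  have : Finite L := Module.finite_of_finite K
  obtain ⟨v, hv⟩ := Module.Dual.exists_forall_apply_ne_zero_of_card_lt f hf hcard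
  refine ⟨v, v.2, le_antisymm (fun x hx => ?_) (rationalRelations_le_ker v.2)⟩
  by_contra hxN
  exact hv ⟨x, hxN⟩ (by simpa [f] using hx)

theorem isGreatest_vrk [Fintype K] [FiniteDimensional K L] (hk : k ≤ finrank K L)
    (V : Submodule L (Fin k → L)) :
    IsGreatest {r | ∃ v ∈ V, vrk K v = r} (k - finrank K (rationalRelations K V)) := by
  refine ⟨?_, ?_⟩
  · obtain ⟨v, hv, hker⟩ := exists_ker_linearCombination_eq_rationalRelations hk V
    refine ⟨v, hv, ?_⟩
    have := vrk_add_finrank_ker (K := K) v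
    rw [hker] at this
    omega
  · rintro _ ⟨v, hv, rfl⟩
    have := vrk_add_finrank_ker (K := K) v
    have := Submodule.finrank_mono (rationalRelations_le_ker (K := K) hv)
    omega

theorem maxrk_eq_sub_finrank_rationalRelations [Fintype K] [FiniteDimensional K L]
    (hk : k ≤ finrank K L)
    (V : Submodule L (Fin k → L)) :
    maxrk K V = k - finrank K (rationalRelations K V) :=
  (isGreatest_vrk hk V).csSup_eq

theorem finrank_le_maxrk [Fintype K] [FiniteDimensional K L] (hk : k ≤ finrank K L)
    (V : Submodule L (Fin k → L)) : finrank L V ≤ maxrk K V := by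
  have := Submodule.finrank_mono (le_zeroLocus_rationalRelations (K := K) V)
  have := finrank_zeroLocus_add_finrank (L := L) (rationalRelations K V)
  rw [maxrk_eq_sub_finrank_rationalRelations hk]
  omega

theorem frobClosed_of_finrank_eq_maxrk [Fintype K] [FiniteDimensional K L] (hk : k ≤ finrank K L)
    {V : Submodule L (Fin k → L)} (hV : finrank L V = maxrk K V) : FrobClosed K V := by
  have hle := le_zeroLocus_rationalRelations (K := K) V
  have := finrank_zeroLocus_add_finrank (L := L) (rationalRelations K V)
  rw [maxrk_eq_sub_finrank_rationalRelations hk] at hV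
  rw [Submodule.eq_of_le_of_finrank_le hle (by omega)]
  exact frobClosed_zeroLocus _

end Relations

section Frobenius

variable {K L : Type*} [Field K] [Fintype K] [Field L] [Algebra K L]

theorem eq_zero_of_forall_sum_mul_pow_card_pow_eq_zero (U : Submodule K L)
    [FiniteDimensional K U] {c : Fin (finrank K U) → L}
    (hc : ∀ u ∈ U, ∑ s, c s * u ^ Fintype.card K ^ (s : ℕ) = 0) : c = 0 := by
  classical
  ext s
  set q := Fintype.card K
  have hq : 2 ≤ q := Fintype.one_lt_card
  let P : L[X] := ∑ t, C (c t) * X ^ q ^ (t : ℕ)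
  have : Finite U := Module.finite_of_finite K
  have : Fintype U := Fintype.ofFinite U
  have hdeg : P.natDegree < Fintype.card U := by
    rw [card_eq_pow_finrank (K := K)]
    refine lt_of_le_of_lt (natDegree_sum_le_of_forall_le _ _ fun t _ => ?_)
      (Nat.pow_lt_pow_right hq (Nat.sub_one_lt_of_lt s.2))
    exact (natDegree_C_mul_X_pow_le _ _).trans (Nat.pow_le_pow_right (by omega) (by omega))
  have hP : P = 0 := eq_zero_of_natDegree_lt_card_of_eval_eq_zero P Subtype.val_injective
    (fun u => by simpa [P, eval_finsetSum] using hc u u.2) hdeg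
  simpa [P, finsetSum_coeff, coeff_C_mul_X_pow, (Nat.pow_right_injective hq).eq_iff,
    Fin.val_inj] using congrArg (coeff · (q ^ (s : ℕ))) hP

theorem linearIndependent_pow_card_pow {k : ℕ} (v : Fin k → L) :
    LinearIndependent L fun s : Fin (vrk K v) => fun i => v i ^ Fintype.card K ^ (s : ℕ) := by
  rw [Fintype.linearIndependent_iff]
  intro c hc
  let U := Submodule.span K (Set.range v)
  have : FiniteDimensional K U := FiniteDimensional.span_of_finite K (Set.finite_range v)
  let ψ : L →ₗ[K] L := ∑ s, c s • (FiniteField.frobeniusAlgHom K L ^ (s : ℕ)).toLinearMap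
  have hψ (x : L) : ψ x = ∑ s, c s * x ^ Fintype.card K ^ (s : ℕ) := by
    simp [ψ, AlgHom.coe_pow, FiniteField.coe_frobeniusAlgHom, pow_iterate]
  have hU : U ≤ LinearMap.ker ψ := by
    refine Submodule.span_le.2 ?_
    rintro _ ⟨i, rfl⟩
    simpa [hψ] using congrFun hc i
  exact congrFun (eq_zero_of_forall_sum_mul_pow_card_pow_eq_zero U
    fun u hu => (hψ u).symm.trans (hU hu))

namespace FrobClosed

variable {k : ℕ} {V : Submodule L (Fin k → L)}

theorem pow_card_pow_mem (hV : FrobClosed K V) {v : Fin k → L} (hv : v ∈ V) (n : ℕ) :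
    (fun i => v i ^ Fintype.card K ^ n) ∈ V := by
  induction n with
  | zero => simpa using hv
  | succ n ih => simpa [pow_succ, pow_mul] using hV _ ih

theorem vrk_le_finrank (hV : FrobClosed K V) {v : Fin k → L} (hv : v ∈ V) :
    vrk K v ≤ finrank L V := by
  have hspan : Submodule.span L (Set.range fun s : Fin (vrk K v) =>
      fun i => v i ^ Fintype.card K ^ (s : ℕ)) ≤ V :=
    Submodule.span_le.2 <| Set.range_subset_iff.2 fun s => hV.pow_card_pow_mem hv s
  simpa [finrank_span_eq_card (linearIndependent_pow_card_pow v)] using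
    Submodule.finrank_mono hspan

theorem maxrk_le_finrank (hV : FrobClosed K V) : maxrk K V ≤ finrank L V :=
  csSup_le' <| by
    rintro _ ⟨v, hv, rfl⟩
    exact hV.vrk_le_finrank hv

end FrobClosed

end Frobenius

/-- for 1 ≤ k ≤ m, a subspace V ⊆ F_{q^m}^k is Frobenius-closed
iff it is an optimal Gabidulin anticode, i.e. dim_{F_{q^m}} V = maxrk V. -/
theorem stmt8 {K L : Type*} [Field K] [Field L] [Algebra K L] [Fintype K] {k m : ℕ}
    (hk : 1 ≤ k) (hkm : k ≤ m) (hm : Module.finrank K L = m)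
    (V : Submodule L (Fin k → L)) :
    FrobClosed K V ↔ Module.finrank L V = maxrk K V := by
  have : FiniteDimensional K L := FiniteDimensional.of_finrank_pos (by omega)
  have hkL : k ≤ finrank K L := hm ▸ hkm
  exact ⟨fun hV => (finrank_le_maxrk hkL V).antisymm hV.maxrk_le_finrank,
    frobClosed_of_finrank_eq_maxrk hkL⟩
end

section
/- Let 1 ≤ t < k ≤ m and let M ∈ Mat(t × k, F_{q^m}) be a full-rank matrix that is almost in row-reduced echelon form (some permutation of its rows is in row-reduced echelon form), whose first row has at least one entry in F_{q^m} \ F_q. Then there exist elements α_1, ..., α_t ∈ F_{q^m}, linearly independent over F_q, such that the vector Σ_i α_i M_i (where M_i are the rows of M) has rank at least t + 1, where the rank of a vector is the F_q-dimension of the span of its components. -/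
/-!
The pivot columns of `∑ αᵢ Mᵢ` reproduce the `αᵢ`, so its entries span a space containing
`W = span_K (α)`, which has dimension `t`; the rank exceeds `t` as soon as the entry
`∑ αᵢ Mᵢⱼ` in a column `j` with `M₀ⱼ ∉ K` lies outside `W`. To find such `α`, take a basis `β`
of a `t`-dimensional `W` with `1 = β_{i₁}` (`i₁ ≠ 0`) and `M₀ⱼ ∉ W`. Replacing `β₀` by
`β₀ + β_{i₁}` keeps `W` but adds `M₀ⱼ ∉ W` to `∑ βᵢ Mᵢⱼ`, so one of the two bases works.
For `t = 1` the basis `β = (1)` works directly.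
-/

/-- Row-reduced echelon form with strictly increasing pivots. -/
def IsRRE {t k : ℕ} {F : Type*} [Field F] (M : Matrix (Fin t) (Fin k) F) : Prop :=
  ∃ p : Fin t → Fin k, StrictMono p ∧
    (∀ i, M i (p i) = 1) ∧
    (∀ i j, j < p i → M i j = 0) ∧
    (∀ i i', i' ≠ i → M i' (p i) = 0)

open Module Submodule Set

theorem exists_linearIndependent_fin_extend {R M : Type*} [DivisionRing R] [AddCommGroup M]
    [Module R M] {a N : ℕ} {v : Fin a → M} (hv : LinearIndependent R v)
    (haN : a ≤ N) (hN : N ≤ finrank R M) :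
    ∃ w : Fin N → M, LinearIndependent R w ∧ ∀ i, w (Fin.castLE haN i) = v i := by
  induction N, haN using Nat.le_induction with
  | base => exact ⟨v, hv, fun i => by simp⟩
  | succ N haN ih =>
    obtain ⟨w, hw, hwv⟩ := ih (by omega)
    obtain ⟨x, hx⟩ := exists_linearIndependent_snoc_of_lt_finrank hw (by omega)
    refine ⟨Fin.snoc w x, hx, fun i => ?_⟩
    rw [← hwv i, ← Fin.snoc_castSucc (α := fun _ => M) x w]
    rfl

theorem exists_linearIndependent_apply_eq_notMem_span {K V ι : Type*} [Field K]
    [AddCommGroup V] [Module K V] [Fintype ι] [DecidableEq ι] {x y : V}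
    (hxy : LinearIndependent K ![x, y]) (hcard : Fintype.card ι < finrank K V) (i₁ : ι) :
    ∃ β : ι → V, LinearIndependent K β ∧ β i₁ = y ∧ x ∉ span K (range β) := by
  set n := Fintype.card ι
  have hn : 0 < n := Fintype.card_pos_iff.mpr ⟨i₁⟩
  obtain ⟨f, hf, hfxy⟩ := exists_linearIndependent_fin_extend hxy (by omega : 2 ≤ n + 1) hcard
  have hf0 : f 0 = x := hfxy 0
  have hf1 : f ⟨1, by omega⟩ = y := hfxy 1
  rw [← Fin.cons_self_tail f, hf0, linearIndependent_finCons] at hf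
  let e : ι ≃ Fin n := (Fintype.equivFin ι).trans (Equiv.swap (Fintype.equivFin ι i₁) ⟨0, hn⟩)
  refine ⟨Fin.tail f ∘ e, hf.1.comp e e.injective, ?_, ?_⟩
  · simp [e, Fin.tail, ← hf1]
  · rw [e.surjective.range_comp]
    exact hf.2

theorem exists_linearIndependent_sum_mul_notMem_span_of_mul_notMem {K L ι : Type*} [Field K]
    [Ring L] [Module K L] [Fintype ι] [DecidableEq ι] {β c : ι → L}
    (hβ : LinearIndependent K β) {i₀ i₁ : ι} (hi : i₁ ≠ i₀)
    (hc : β i₁ * c i₀ ∉ span K (range β)) :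
    ∃ α : ι → L, LinearIndependent K α ∧ ∑ i, α i * c i ∉ span K (range α) := by
  by_contra! h
  set β' := Function.update β i₀ (β i₀ + (1 : K) • β i₁)
  have hspan : span K (range β') = span K (range β) := span_range_update_add_smul hi β 1
  have hβ' : LinearIndependent K β' := by
    rw [linearIndependent_iff_card_eq_finrank_span] at hβ ⊢
    rwa [Set.finrank, hspan]
  have hsum : ∑ i, β' i * c i = ∑ i, β i * c i + β i₁ * c i₀ := by
    have : β' = β + Pi.single i₀ (β i₁) := by
      ext j
      rcases eq_or_ne j i₀ with rfl | hj <;> simp_all [β']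
    simp [this, add_mul, Finset.sum_add_distrib, Pi.single_apply, ite_mul]
  apply hc
  have := sub_mem (hspan ▸ h β' hβ') (h β hβ)
  rwa [hsum, add_sub_cancel_left] at this

theorem exists_linearIndependent_sum_mul_notMem_span {K L ι : Type*} [Field K] [Ring L]
    [Nontrivial L] [Algebra K L] [Fintype ι] [DecidableEq ι] {c : ι → L} {i₀ : ι}
    (hc : c i₀ ∉ (algebraMap K L).range) (hcard : Fintype.card ι < finrank K L) :
    ∃ α : ι → L, LinearIndependent K α ∧ ∑ i, α i * c i ∉ span K (range α) := by
  have hc' : c i₀ ∉ span K {1} := by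
    rwa [← Submodule.one_eq_span, Submodule.mem_one]
  by_cases hι : ∃ i₁, i₁ ≠ i₀
  · obtain ⟨i₁, hi⟩ := hι
    have hpair : LinearIndependent K ![c i₀, 1] := by
      refine linearIndependent_fin2.mpr ⟨one_ne_zero, fun a ha => hc' ?_⟩
      have ha : a • (1 : L) = c i₀ := ha
      exact ha ▸ smul_mem _ a (mem_span_singleton_self 1)
    obtain ⟨β, hβ, hβ₁, hcβ⟩ := exists_linearIndependent_apply_eq_notMem_span hpair hcard i₁
    exact exists_linearIndependent_sum_mul_notMem_span_of_mul_notMem hβ hi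
      (by rwa [hβ₁, one_mul])
  · push Not at hι
    have : Nonempty ι := ⟨i₀⟩
    have : Subsingleton ι := ⟨fun i j => (hι i).trans (hι j).symm⟩
    refine ⟨fun _ => 1, .of_subsingleton i₀ one_ne_zero, ?_⟩
    rwa [Fintype.sum_subsingleton _ i₀, one_mul, range_const]

theorem IsRRE.range_subset_range_sum_smul {F : Type*} [Field F] {t k : ℕ}
    {M : Matrix (Fin t) (Fin k) F} {π : Equiv.Perm (Fin t)}
    (hM : IsRRE (Matrix.of fun i => M (π i))) (α : Fin t → F) :
    range α ⊆ range (∑ i, α i • M i) := by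
  obtain ⟨p, -, hpivot, -, hcol⟩ := hM
  rintro _ ⟨r, rfl⟩
  refine ⟨p (π.symm r), ?_⟩
  rw [Finset.sum_apply, ← Equiv.sum_comp π, Fintype.sum_eq_single (π.symm r)]
  · have : M r (p (π.symm r)) = 1 := by simpa using hpivot (π.symm r)
    simp [this]
  · intro i hi
    have : M (π i) (p (π.symm r)) = 0 := hcol (π.symm r) i hi
    simp [this]

theorem stmt9_general {K L : Type*} [Field K] [Field L] [Algebra K L] {t k m : ℕ}
    (ht : 1 ≤ t) (htk : t < k) (hkm : k ≤ m) (hm : Module.finrank K L = m)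
    (M : Matrix (Fin t) (Fin k) L)
    (halmost : ∃ π : Equiv.Perm (Fin t), IsRRE (Matrix.of fun i => M (π i)))
    (hrow : ∃ j, M ⟨0, ht⟩ j ∉ (algebraMap K L).range) :
    ∃ α : Fin t → L, LinearIndependent K α ∧ t + 1 ≤ vrk K (∑ i, α i • M i) := by
  obtain ⟨π, hπ⟩ := halmost
  obtain ⟨j, hj⟩ := hrow
  obtain ⟨α, hα, hαj⟩ := exists_linearIndependent_sum_mul_notMem_span (c := fun i => M i j) hj
    (by rw [Fintype.card_fin, hm]; omega)
  refine ⟨α, hα, ?_⟩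
  set v := ∑ i, α i • M i
  have hlt : span K (range α) < span K (range v) := by
    refine lt_of_le_of_ne (span_mono (hπ.range_subset_range_sum_smul α)) fun h => hαj ?_
    rw [h]
    exact subset_span ⟨j, by simp [v, Finset.sum_apply]⟩
  have : FiniteDimensional K (span K (range v)) := .span_of_finite K (finite_range v)
  calc t + 1 = finrank K (span K (range α)) + 1 := by
        rw [finrank_span_eq_card hα, Fintype.card_fin]
    _ ≤ vrk K v := Submodule.finrank_lt_finrank_of_lt hlt

/-- if M is a full-rank t × k matrix over F_{q^m} (t < k ≤ m),
almost in row-reduced echelon form, whose first row has an entry outside F_q,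
then there are F_q-independent α₁,...,α_t with rk(∑ αᵢ Mᵢ) ≥ t + 1. -/
theorem stmt9 {K L : Type*} [Field K] [Field L] [Algebra K L] [Fintype K] {t k m : ℕ}
    (ht : 1 ≤ t) (htk : t < k) (hkm : k ≤ m) (hm : Module.finrank K L = m)
    (M : Matrix (Fin t) (Fin k) L)
    (hfull : LinearIndependent L (fun i => M i))
    (halmost : ∃ π : Equiv.Perm (Fin t), IsRRE (Matrix.of fun i => M (π i)))
    (hrow : ∃ j, M ⟨0, ht⟩ j ∉ (algebraMap K L).range) :
    ∃ α : Fin t → L, LinearIndependent K α ∧ t + 1 ≤ vrk K (∑ i, α i • M i) :=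
  stmt9_general ht htk hkm hm M halmost hrow
end

section
/- Let 1 ≤ k ≤ m and let 𝒞 ⊆ Mat(k × m, F_q) be an F_q-subspace of matrices. Then dim_{F_q}(𝒞) ≤ m · maxrk(𝒞), where maxrk(𝒞) is the maximum matrix rank of elements of 𝒞. -/
/-!
Gabidulin codes. Over `F = F_q` with `k ≤ m`, embed `F^k` into `L = F_{q^m}`; for `a ∈ L^j`,
`j = k - r`, read the `F`-linear map `x ↦ ∑_{i<j} a_i x^{q^i}`, restricted to `F^k`, as a
`k × m` matrix. For `a ≠ 0` its kernel consists of roots of a nonzero polynomial of degree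
`< q^j`, so it has dimension `< j` and the matrix has rank `> r`. These matrices form a space
of dimension `m (k - r)` meeting any `𝒞` with `maxrk 𝒞 = r` only in `0`, whence
`dim 𝒞 + m (k - r) ≤ k m`.
-/

/-- Maximum rank of a Delsarte code 𝒞 ⊆ Mat(k × m, F_q). -/
noncomputable def dmaxrk {K : Type*} [Field K] {k m : ℕ}
    (𝒞 : Submodule K (Matrix (Fin k) (Fin m) K)) : ℕ :=
  sSup {r | ∃ M ∈ 𝒞, M.rank = r}

open Module Polynomial

section LinearAlgebra

variable {K V M N : Type*} [Field K] [AddCommGroup V] [Module K V] [AddCommGroup M] [Module K M]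
  [AddCommGroup N] [Module K N]

theorem LinearMap.finrank_ker_comp_le_of_injective [FiniteDimensional K M] {f : M →ₗ[K] N}
    {g : V →ₗ[K] M} (hg : Function.Injective g) :
    finrank K (ker (f ∘ₗ g)) ≤ finrank K (ker f) :=
  (Submodule.equivMapOfInjective g hg _).finrank_eq.trans_le
    (Submodule.finrank_mono (Submodule.map_le_iff_le_comap.2 fun _ hx => hx))

theorem LinearMap.rank_toMatrix {ι κ : Type*} [Fintype ι] [Fintype κ] [DecidableEq ι]
    (v : Basis ι K V) (w : Basis κ K M) (f : V →ₗ[K] M) :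
    (LinearMap.toMatrix v w f).rank = finrank K (range f) := by
  rw [Matrix.rank_eq_finrank_range_toLin _ w v, Matrix.toLin_toMatrix]

theorem Submodule.finrank_add_finrank_le_of_rank_le_of_lt_rank {m n : Type*} [Fintype m]
    [Fintype n] {𝒞 W : Submodule K (Matrix m n K)} {r : ℕ} (h𝒞 : ∀ M ∈ 𝒞, M.rank ≤ r)
    (hW : ∀ M ∈ W, M ≠ 0 → r < M.rank) :
    finrank K 𝒞 + finrank K W ≤ Fintype.card m * Fintype.card n := by
  have hdisj : Disjoint 𝒞 W := Submodule.disjoint_def.2 fun M hM𝒞 hMW =>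
    by_contra fun hM => (h𝒞 M hM𝒞).not_gt (hW M hMW hM)
  simpa [Module.finrank_matrix] using Submodule.finrank_add_finrank_le_of_disjoint hdisj

end LinearAlgebra

namespace FiniteField

variable (K : Type*) {L : Type*} [Field K] [Fintype K] [Field L] [Algebra K L]

def linearized (j : ℕ) : (Fin j → L) →ₗ[K] L →ₗ[K] L :=
  (Fintype.linearCombination L fun i : Fin j =>
    (frobeniusAlgHom K L ^ (i : ℕ)).toLinearMap).restrictScalars K

theorem linearized_apply {j : ℕ} (a : Fin j → L) (x : L) :
    linearized K j a x = ∑ i, a i * x ^ Fintype.card K ^ (i : ℕ) := by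
  simp [linearized, Fintype.linearCombination_apply, AlgHom.coe_pow, coe_frobeniusAlgHom,
    pow_iterate]

theorem exists_polynomial_eval_linearized {j : ℕ} {a : Fin j → L} (ha : a ≠ 0) :
    ∃ P : L[X], P ≠ 0 ∧ P.natDegree < Fintype.card K ^ j ∧
      ∀ x, P.eval x = linearized K j a x := by
  have hq : 1 < Fintype.card K := Fintype.one_lt_card
  obtain ⟨i₀, hi₀⟩ := Function.ne_iff.1 ha
  let P : L[X] := ∑ i : Fin j, C (a i) * X ^ Fintype.card K ^ (i : ℕ)
  have hcoeff : P.coeff (Fintype.card K ^ (i₀ : ℕ)) = a i₀ := by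
    simp [P, finsetSum_coeff, (Nat.pow_right_injective hq).eq_iff, Fin.val_inj]
  have hP : P ≠ 0 := fun h => hi₀ (by simpa [h] using hcoeff.symm)
  refine ⟨P, hP, (natDegree_lt_iff_degree_lt hP).2 ?_, fun x => ?_⟩
  · refine (degree_sum_le _ _).trans_lt
      ((Finset.sup_lt_iff (WithBot.bot_lt_coe _)).2 fun i _ => ?_)
    exact (degree_C_mul_X_pow_le _ _).trans_lt
      (WithBot.coe_lt_coe.2 (Nat.pow_lt_pow_right hq i.2))
  · simp [P, linearized_apply, eval_finsetSum]

theorem finrank_ker_linearized_lt [Finite L] {j : ℕ} {a : Fin j → L} (ha : a ≠ 0) :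
    finrank K (LinearMap.ker (linearized K j a)) < j := by
  obtain ⟨P, hP, hdeg, heval⟩ := exists_polynomial_eval_linearized K ha
  have hker : (LinearMap.ker (linearized K j a) : Set L) ⊆ P.rootSet L := fun x hx => by
    rw [mem_rootSet_of_ne hP, aeval_def, Algebra.algebraMap_self, eval₂_id, heval]
    exact hx
  have hcard : Fintype.card K ^ finrank K (LinearMap.ker (linearized K j a)) <
      Fintype.card K ^ j :=
    calc Fintype.card K ^ finrank K (LinearMap.ker (linearized K j a))
        = Nat.card (LinearMap.ker (linearized K j a)) := by
          rw [Module.natCard_eq_pow_finrank (K := K), Nat.card_eq_fintype_card]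
      _ = (LinearMap.ker (linearized K j a) : Set L).ncard := Nat.card_coe_set_eq _
      _ ≤ (P.rootSet L).ncard := Set.ncard_le_ncard hker (P.rootSet_finite L)
      _ ≤ P.natDegree := P.ncard_rootSet_le L
      _ < Fintype.card K ^ j := hdeg
  exact (Nat.pow_lt_pow_iff_right Fintype.one_lt_card).1 hcard

theorem finrank_lt_finrank_range_linearized_comp_add [Finite L] {V : Type*} [AddCommGroup V]
    [Module K V] [FiniteDimensional K V] {g : V →ₗ[K] L} (hg : Function.Injective g) {j : ℕ}
    {a : Fin j → L} (ha : a ≠ 0) :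
    finrank K V < finrank K (LinearMap.range (linearized K j a ∘ₗ g)) + j := by
  have : Module.Finite K L := .of_finite
  have hker := LinearMap.finrank_ker_comp_le_of_injective (f := linearized K j a) hg
  have := finrank_ker_linearized_lt K ha
  have := LinearMap.finrank_range_add_finrank_ker (linearized K j a ∘ₗ g)
  omega

theorem exists_submodule_matrix_finrank_eq_forall_lt_rank {k m : ℕ} (hkm : k ≤ m) [NeZero m]
    (r : ℕ) : ∃ W : Submodule K (Matrix (Fin k) (Fin m) K),
      finrank K W = m * (k - r) ∧ ∀ M ∈ W, M ≠ 0 → r < M.rank := by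
  obtain ⟨p, _⟩ := CharP.exists K
  have : Fact p.Prime := ⟨CharP.char_is_prime K p⟩
  let b : Basis (Fin m) K (Extension K p m) := finBasisOfFinrankEq K _ (finrank_extension K p m)
  let g := Fintype.linearCombination K (b ∘ Fin.castLE hkm)
  have hg : Function.Injective g := linearIndependent_iff_injective_fintypeLinearCombination.1
    (b.linearIndependent.comp _ (Fin.castLE_injective hkm))
  let Φ : (Fin (k - r) → Extension K p m) →ₗ[K] Matrix (Fin k) (Fin m) K :=
    (Matrix.transposeLinearEquiv _ _ K K).toLinearMap ∘ₗ
      (LinearMap.toMatrix (Pi.basisFun K (Fin k)) b).toLinearMap ∘ₗ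
        LinearMap.lcomp K _ g ∘ₗ linearized K (k - r)
  have hΦ : ∀ a ≠ 0, r < (Φ a).rank := fun a ha => by
    have hlt := finrank_lt_finrank_range_linearized_comp_add K hg ha
    have hle := (linearized K (k - r) a ∘ₗ g).finrank_range_le
    have hrank : (Φ a).rank = finrank K (LinearMap.range (linearized K (k - r) a ∘ₗ g)) := by
      change (LinearMap.toMatrix _ b (linearized K (k - r) a ∘ₗ g)).transpose.rank = _
      rw [Matrix.rank_transpose, LinearMap.rank_toMatrix]
    rw [finrank_fin_fun] at hlt hle
    omega
  have hΦinj : Function.Injective Φ := (injective_iff_map_eq_zero Φ).2 fun a h =>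
    by_contra fun ha => by simpa [h] using hΦ a ha
  refine ⟨LinearMap.range Φ, ?_, ?_⟩
  · rw [LinearMap.finrank_range_of_inj hΦinj, finrank_pi_fintype, finrank_extension]
    simp [mul_comm]
  · rintro _ ⟨a, rfl⟩ h
    exact hΦ a (by rintro rfl; exact h (map_zero Φ))

end FiniteField

theorem rank_le_dmaxrk {K : Type*} [Field K] {k m : ℕ}
    {𝒞 : Submodule K (Matrix (Fin k) (Fin m) K)} {M : Matrix (Fin k) (Fin m) K} (hM : M ∈ 𝒞) :
    M.rank ≤ dmaxrk 𝒞 :=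
  le_csSup ⟨k, by rintro _ ⟨N, -, rfl⟩; exact N.rank_le_height⟩ ⟨M, hM, rfl⟩

/-- for 1 ≤ k ≤ m and a Delsarte code 𝒞 ⊆ Mat(k × m, F_q),
dim_{F_q} 𝒞 ≤ m · maxrk 𝒞. -/
theorem stmt11 {K : Type*} [Field K] [Fintype K] {k m : ℕ}
    (hk : 1 ≤ k) (hkm : k ≤ m)
    (𝒞 : Submodule K (Matrix (Fin k) (Fin m) K)) :
    Module.finrank K 𝒞 ≤ m * dmaxrk 𝒞 := by
  have : NeZero m := ⟨by omega⟩
  obtain ⟨W, hW, hWrank⟩ :=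
    FiniteField.exists_submodule_matrix_finrank_eq_forall_lt_rank K hkm (dmaxrk 𝒞)
  have h := Submodule.finrank_add_finrank_le_of_rank_le_of_lt_rank (fun _ => rank_le_dmaxrk) hWrank
  rw [hW, Fintype.card_fin, Fintype.card_fin, Nat.mul_sub, mul_comm k] at h
  omega
end
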